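/- Let E be a finite-dimensional subspace of F([0,1]²) and ε > 0. Then there exist n ∈ ℕ and a finite-dimensional subspace E' of F(nA_n) ⊆ F([0,1]²) with Banach–Mazur distance d_BM(E, E') < 1 + ε. -/

import Mathlib

open Metric Set
open scoped NNReal ENNReal

/-- The space of real-valued Lipschitz functions on `M` vanishing at the base point `z`. -/
structure Lip0 {M : Type*} [MetricSpace M] (z : M) where
  toFun : M → ℝ
  lipschitz' : ∃ K : ℝ≥0, LipschitzWith K toFun
  map_base' : toFun z = 0

namespace Lip0

variable {M : Type*} [MetricSpace M] {z : M}

instance : FunLike (Lip0 z) M ℝ where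
  coe := Lip0.toFun
  coe_injective := by rintro ⟨f, _, _⟩ ⟨g, _, _⟩ h; simpa using h

@[simp] lemma coe_mk (f : M → ℝ) (h1 h2) : ⇑(⟨f, h1, h2⟩ : Lip0 z) = f := rfl

lemma map_base (f : Lip0 z) : f z = 0 := f.map_base'

instance : Zero (Lip0 z) := ⟨⟨0, ⟨0, LipschitzWith.const (0 : ℝ)⟩, rfl⟩⟩

instance : Add (Lip0 z) :=
  ⟨fun f g => ⟨⇑f + ⇑g,
    ⟨f.lipschitz'.choose + g.lipschitz'.choose,
      f.lipschitz'.choose_spec.add g.lipschitz'.choose_spec⟩,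
    by simp [map_base f, map_base g]⟩⟩

instance : Neg (Lip0 z) :=
  ⟨fun f => ⟨-⇑f, ⟨f.lipschitz'.choose, f.lipschitz'.choose_spec.neg⟩,
    by simp [map_base f]⟩⟩

lemma lip_const_smul {f : M → ℝ} {K : ℝ≥0} (h : LipschitzWith K f) (c : ℝ) :
    LipschitzWith (‖c‖₊ * K) (c • f) := by
  rw [lipschitzWith_iff_dist_le_mul] at h ⊢
  intro x y
  calc dist ((c • f) x) ((c • f) y) = ‖c‖ * dist (f x) (f y) := by
        rw [Pi.smul_apply, Pi.smul_apply, dist_smul₀]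
    _ ≤ ‖c‖ * (K * dist x y) := by
        apply mul_le_mul_of_nonneg_left (h x y) (norm_nonneg c)
    _ = (‖c‖₊ * K : ℝ≥0) * dist x y := by push_cast; ring

instance : SMul ℝ (Lip0 z) :=
  ⟨fun c f => ⟨c • ⇑f,
    ⟨‖c‖₊ * f.lipschitz'.choose, lip_const_smul f.lipschitz'.choose_spec c⟩,
    by simp [map_base f]⟩⟩

instance : Sub (Lip0 z) := ⟨fun f g => f + -g⟩
instance : SMul ℕ (Lip0 z) := ⟨fun n f => (n : ℝ) • f⟩
instance : SMul ℤ (Lip0 z) := ⟨fun n f => (n : ℝ) • f⟩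

@[simp] lemma coe_zero : ⇑(0 : Lip0 z) = 0 := rfl
@[simp] lemma coe_add (f g : Lip0 z) : ⇑(f + g) = ⇑f + ⇑g := rfl
@[simp] lemma coe_neg (f : Lip0 z) : ⇑(-f) = -⇑f := rfl
@[simp] lemma coe_smul (c : ℝ) (f : Lip0 z) : ⇑(c • f) = c • ⇑f := rfl
@[simp] lemma coe_sub (f g : Lip0 z) : ⇑(f - g) = ⇑f - ⇑g := by
  show ⇑(f + -g) = _; ext x; simp [sub_eq_add_neg]

instance : AddCommGroup (Lip0 z) :=
  DFunLike.coe_injective.addCommGroup _ coe_zero coe_add coe_neg coe_sub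
    (fun f n => by show ⇑((n : ℝ) • f) = _; ext x; simp)
    (fun f n => by show ⇑((n : ℝ) • f) = _; ext x; simp)

instance : Module ℝ (Lip0 z) := by
  refine Function.Injective.module ℝ (AddMonoidHom.mk' (fun (f : Lip0 z) => ⇑f) coe_add) ?_ ?_
  · exact DFunLike.coe_injective
  · exact coe_smul

/-- The least Lipschitz constant. -/
noncomputable def lipConst (f : M → ℝ) : ℝ≥0 := sInf {K : ℝ≥0 | LipschitzWith K f}

lemma lipschitzWith_lipConst {f : M → ℝ} (h : ∃ K : ℝ≥0, LipschitzWith K f) :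
    LipschitzWith (lipConst f) f := by
  rw [lipschitzWith_iff_dist_le_mul]
  intro x y
  rcases eq_or_ne x y with rfl | hxy
  · simp
  have hd : 0 < dist x y := dist_pos.2 hxy
  have h1 : (⟨dist (f x) (f y) / dist x y, by positivity⟩ : ℝ≥0) ≤ lipConst f := by
    apply le_csInf h
    intro K hK
    rw [← NNReal.coe_le_coe (r₁ := ⟨_, _⟩)]
    have hK' := lipschitzWith_iff_dist_le_mul.1 hK
    exact (div_le_iff₀ hd).2 (by simpa [mul_comm] using hK' x y)
  replace h1 : dist (f x) (f y) / dist x y ≤ (lipConst f : ℝ) := h1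
  calc dist (f x) (f y) = dist (f x) (f y) / dist x y * dist x y := by field_simp
    _ ≤ (lipConst f : ℝ) * dist x y := by
        apply mul_le_mul_of_nonneg_right _ hd.le
        exact h1



lemma lipConst_le {f : M → ℝ} {K : ℝ≥0} (h : LipschitzWith K f) : lipConst f ≤ K :=
  csInf_le (OrderBot.bddBelow _) h

lemma dist_le_lipConst (f : Lip0 z) (x y : M) :
    dist (f x) (f y) ≤ (lipConst ⇑f : ℝ) * dist x y :=
  lipschitzWith_iff_dist_le_mul.1 (lipschitzWith_lipConst f.lipschitz') x y

noncomputable instance : Norm (Lip0 z) := ⟨fun f => (lipConst ⇑f : ℝ)⟩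

lemma norm_def (f : Lip0 z) : ‖f‖ = (lipConst ⇑f : ℝ) := rfl

lemma eq_zero_of_lipConst_eq_zero (f : Lip0 z) (h : lipConst ⇑f = 0) : f = 0 := by
  apply DFunLike.coe_injective
  ext x
  have h2 := dist_le_lipConst f x z
  rw [h, map_base f] at h2
  simp only [NNReal.coe_zero, zero_mul] at h2
  have := dist_nonneg (x := f x) (y := (0:ℝ))
  simp only [coe_zero, Pi.zero_apply]
  have : dist (f x) (0:ℝ) = 0 := le_antisymm h2 dist_nonneg
  simpa [dist_eq_norm] using this

lemma lipConst_smul (c : ℝ) (f : Lip0 z) : lipConst ⇑(c • f) = ‖c‖₊ * lipConst ⇑f := by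
  have le1 : ∀ (c : ℝ) (f : Lip0 z), lipConst ⇑(c • f) ≤ ‖c‖₊ * lipConst ⇑f := by
    intro c f
    exact lipConst_le (lip_const_smul (lipschitzWith_lipConst f.lipschitz') c)
  rcases eq_or_ne c 0 with rfl | hc
  · simp only [nnnorm_zero, zero_mul]
    refine le_antisymm ?_ zero_le
    have : (0:ℝ) • f = (0 : Lip0 z) := zero_smul ℝ f
    calc lipConst ⇑((0:ℝ) • f) ≤ ‖(0:ℝ)‖₊ * lipConst ⇑f := le1 0 f
      _ = 0 := by simp
  · refine le_antisymm (le1 c f) ?_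
    have h2 := le1 c⁻¹ (c • f)
    rw [inv_smul_smul₀ hc] at h2
    have hcpos : (0:ℝ≥0) < ‖c‖₊ := by simpa using hc
    calc ‖c‖₊ * lipConst ⇑f ≤ ‖c‖₊ * (‖c⁻¹‖₊ * lipConst ⇑(c • f)) := by
          exact mul_le_mul_of_nonneg_left h2 zero_le
      _ = lipConst ⇑(c • f) := by
          rw [← mul_assoc]
          have : ‖c‖₊ * ‖c⁻¹‖₊ = 1 := by
            rw [← nnnorm_mul, mul_inv_cancel₀ hc, nnnorm_one]
          rw [this, one_mul]

noncomputable def addGroupNorm (z : M) : AddGroupNorm (Lip0 z) where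
  toFun f := (lipConst ⇑f : ℝ)
  map_zero' := by
    simp only [coe_zero]
    norm_cast
    exact le_antisymm (lipConst_le (LipschitzWith.const' (0:ℝ))) zero_le
  add_le' f g := by
    push_cast
    have : lipConst ⇑(f + g) ≤ lipConst ⇑f + lipConst ⇑g := by
      refine lipConst_le ?_
      exact (lipschitzWith_lipConst f.lipschitz').add (lipschitzWith_lipConst g.lipschitz')
    exact_mod_cast this
  neg' f := by
    have h : (-⇑f : M → ℝ) = ⇑((-1 : ℝ) • f) := by ext x; simp
    show (lipConst ⇑(-f) : ℝ) = (lipConst ⇑f : ℝ)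
    rw [coe_neg, h, lipConst_smul]
    simp
  eq_zero_of_map_eq_zero' f h := by
    apply eq_zero_of_lipConst_eq_zero
    have h' : (lipConst ⇑f : ℝ) = 0 := h
    exact_mod_cast h'

noncomputable instance : NormedAddCommGroup (Lip0 z) :=
  (addGroupNorm z).toNormedAddCommGroup

noncomputable instance : NormedSpace ℝ (Lip0 z) where
  norm_smul_le c f := by
    show (lipConst ⇑(c • f) : ℝ) ≤ ‖c‖ * (lipConst ⇑f : ℝ)
    rw [lipConst_smul]
    push_cast
    simp [Real.norm_eq_abs]

end Lip0

section FreeSpace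

variable {M : Type*} [MetricSpace M]

/-- The evaluation functional `δ_x ∈ Lip_0(M)^*`. -/
noncomputable def dirac (z x : M) : StrongDual ℝ (Lip0 z) :=
  LinearMap.mkContinuous
    { toFun := fun f => f x
      map_add' := by intro f g; simp
      map_smul' := by intro c f; simp }
    (dist x z)
    (by
      intro f
      have := Lip0.dist_le_lipConst f x z
      rw [Lip0.map_base f, dist_zero_right] at this
      show ‖f x‖ ≤ dist x z * (Lip0.lipConst ⇑f : ℝ)
      rw [mul_comm]
      exact this)

@[simp] lemma dirac_apply (z x : M) (f : Lip0 z) : dirac z x f = f x := rfl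

/-- The Lipschitz-free space over `M` with base point `z`: the closed linear span of
the evaluation functionals inside `Lip_0(M)^*`. -/
noncomputable def FreeSpace (z : M) : Submodule ℝ (StrongDual ℝ (Lip0 z)) :=
  (Submodule.span ℝ (Set.range (dirac z))).topologicalClosure

/-- The canonical embedding `δ : M → F(M)`. -/
noncomputable def diracF (z x : M) : FreeSpace z :=
  ⟨dirac z x, Submodule.le_topologicalClosure _ (Submodule.subset_span ⟨x, rfl⟩)⟩

end FreeSpace

section Statement16

/-- The unit square in the Euclidean plane. -/
def unitSquare : Set (EuclideanSpace ℝ (Fin 2)) :=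
  {p | p 0 ∈ Set.Icc (0 : ℝ) 1 ∧ p 1 ∈ Set.Icc (0 : ℝ) 1}

lemma zero_mem_unitSquare : (0 : EuclideanSpace ℝ (Fin 2)) ∈ unitSquare :=
  ⟨by simp [Set.mem_Icc], by simp [Set.mem_Icc]⟩

/-- The base point of `F([0,1]²)`. -/
noncomputable def sqBase : unitSquare := ⟨0, zero_mem_unitSquare⟩

/-- The Dirac elements of points of the grid `nA_n = {(i/n, j/n)} ⊆ [0,1]²`, inside
`F([0,1]²)`. -/
noncomputable def gridDiracs (n : ℕ) : Set ↥(FreeSpace sqBase) :=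
  {v | ∃ p : unitSquare,
    (∃ i j : ℕ, i ≤ n ∧ j ≤ n ∧
      (p : EuclideanSpace ℝ (Fin 2)) 0 = (i : ℝ) / (n : ℝ) ∧
      (p : EuclideanSpace ℝ (Fin 2)) 1 = (j : ℝ) / (n : ℝ)) ∧
    v = diracF sqBase p}

noncomputable instance FreeSpace.subAddCommGroup (E : Submodule ℝ ↥(FreeSpace sqBase)) :
    AddCommGroup E :=
  @Submodule.addCommGroup ℝ ↥(FreeSpace sqBase) _ _ _ E


noncomputable instance freeSpaceContinuousAdd : ContinuousAdd ↥(FreeSpace sqBase) :=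
  ⟨Continuous.subtype_mk ((continuous_subtype_val.comp continuous_fst).add
    (continuous_subtype_val.comp continuous_snd)) _⟩

section Aux

open Submodule

/-- Norm estimate for differences of Dirac functionals. -/
lemma dirac_sub_norm_le {M : Type*} [MetricSpace M] (z x y : M) :
    ‖dirac z x - dirac z y‖ ≤ dist x y := by
  refine ContinuousLinearMap.opNorm_le_bound _ dist_nonneg ?_
  intro f
  simp only [ContinuousLinearMap.sub_apply, dirac_apply]
  have h := Lip0.dist_le_lipConst f x y
  rw [dist_eq_norm] at h
  calc ‖f x - f y‖ ≤ (Lip0.lipConst ⇑f : ℝ) * dist x y := h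
    _ = dist x y * ‖f‖ := by rw [Lip0.norm_def]; ring

lemma diracF_sub_norm_le {M : Type*} [MetricSpace M] (z x y : M) :
    ‖diracF z x - diracF z y‖ ≤ dist x y :=
  dirac_sub_norm_le z x y

lemma gridDiracs_mul_subset (n k : ℕ) (hk : 1 ≤ k) :
    gridDiracs n ⊆ gridDiracs (n * k) := by
  rintro v ⟨p, ⟨i, j, hi, hj, h0, h1⟩, rfl⟩
  have hk' : (k : ℝ) ≠ 0 := Nat.cast_ne_zero.2 (by omega)
  refine ⟨p, ⟨i * k, j * k, Nat.mul_le_mul_right _ hi, Nat.mul_le_mul_right _ hj, ?_, ?_⟩, rfl⟩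
  · rw [h0]; push_cast; rw [mul_div_mul_right _ _ hk']
  · rw [h1]; push_cast; rw [mul_div_mul_right _ _ hk']

lemma gridDiracs_factorial_subset {a b : ℕ} (h : a ≤ b) :
    gridDiracs (a.factorial) ⊆ gridDiracs (b.factorial) := by
  obtain ⟨c, hc⟩ := Nat.factorial_dvd_factorial h
  have hc1 : 1 ≤ c := by
    rcases Nat.eq_zero_or_pos c with rfl | h'
    · exfalso; have := b.factorial_pos; omega
    · exact h'
  rw [hc]
  exact gridDiracs_mul_subset _ _ hc1

/-- The chain of subspaces spanned by factorial grids. -/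
noncomputable def gridSpan (m : ℕ) : Submodule ℝ ↥(FreeSpace sqBase) :=
  Submodule.span ℝ (gridDiracs (m.factorial))

lemma gridSpan_mono : Monotone gridSpan := fun _ _ h =>
  Submodule.span_mono (gridDiracs_factorial_subset h)

/-- Every point of the unit square is within `2/k` of a `k`-grid point. -/
lemma exists_grid_point (x : unitSquare) (k : ℕ) (hk : 1 ≤ k) :
    ∃ p : unitSquare,
      (∃ i j : ℕ, i ≤ k ∧ j ≤ k ∧
        (p : EuclideanSpace ℝ (Fin 2)) 0 = (i : ℝ) / (k : ℝ) ∧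
        (p : EuclideanSpace ℝ (Fin 2)) 1 = (j : ℝ) / (k : ℝ)) ∧
      dist x p ≤ 2 / k := by
  obtain ⟨⟨hx00, hx01⟩, hx10, hx11⟩ := x.2
  have hkR : (0 : ℝ) < (k : ℝ) := by exact_mod_cast (by omega : 0 < k)
  set a : ℝ := (x : EuclideanSpace ℝ (Fin 2)) 0 with ha
  set b : ℝ := (x : EuclideanSpace ℝ (Fin 2)) 1 with hb
  set i : ℕ := ⌊a * k⌋₊ with hi
  set j : ℕ := ⌊b * k⌋₊ with hj
  have hik : i ≤ k := by
    have : a * k ≤ k := by nlinarith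
    calc i ≤ ⌊(k : ℝ)⌋₊ := Nat.floor_le_floor this
      _ = k := Nat.floor_natCast k
  have hjk : j ≤ k := by
    have : b * k ≤ k := by nlinarith
    calc j ≤ ⌊(k : ℝ)⌋₊ := Nat.floor_le_floor this
      _ = k := Nat.floor_natCast k
  have hia : |a - (i : ℝ) / k| ≤ 1 / k := by
    have h1 : (i : ℝ) ≤ a * k := Nat.floor_le (by nlinarith)
    have h2 : a * k < i + 1 := Nat.lt_floor_add_one _
    have e1 : (i : ℝ) / k ≤ a := by rw [div_le_iff₀ hkR]; linarith
    have e2 : a ≤ ((i : ℝ) + 1) / k := by rw [le_div_iff₀ hkR]; linarith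
    rw [add_div] at e2
    have hk1 : (0:ℝ) ≤ 1 / k := by positivity
    rw [abs_le]
    constructor <;> linarith
  have hjb : |b - (j : ℝ) / k| ≤ 1 / k := by
    have h1 : (j : ℝ) ≤ b * k := Nat.floor_le (by nlinarith)
    have h2 : b * k < j + 1 := Nat.lt_floor_add_one _
    have e1 : (j : ℝ) / k ≤ b := by rw [div_le_iff₀ hkR]; linarith
    have e2 : b ≤ ((j : ℝ) + 1) / k := by rw [le_div_iff₀ hkR]; linarith
    rw [add_div] at e2
    have hk1 : (0:ℝ) ≤ 1 / k := by positivity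
    rw [abs_le]
    constructor <;> linarith
  have hi01 : (i : ℝ) / k ∈ Set.Icc (0:ℝ) 1 := by
    constructor
    · positivity
    · rw [div_le_one hkR]; exact_mod_cast hik
  have hj01 : (j : ℝ) / k ∈ Set.Icc (0:ℝ) 1 := by
    constructor
    · positivity
    · rw [div_le_one hkR]; exact_mod_cast hjk
  set q : EuclideanSpace ℝ (Fin 2) := !₂[(i : ℝ) / k, (j : ℝ) / k] with hq
  have hq0 : q 0 = (i : ℝ) / k := rfl
  have hq1 : q 1 = (j : ℝ) / k := rfl
  have hqmem : q ∈ unitSquare := ⟨by rw [hq0]; exact hi01, by rw [hq1]; exact hj01⟩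
  refine ⟨⟨q, hqmem⟩, ⟨i, j, hik, hjk, hq0, hq1⟩, ?_⟩
  have hdist : dist x (⟨q, hqmem⟩ : unitSquare)
      = dist (x : EuclideanSpace ℝ (Fin 2)) q := rfl
  rw [hdist, EuclideanSpace.dist_eq, Fin.sum_univ_two]
  have d0 : dist ((x : EuclideanSpace ℝ (Fin 2)) 0) (q 0) ≤ 1 / k := by
    rw [hq0, Real.dist_eq]; exact hia
  have d1 : dist ((x : EuclideanSpace ℝ (Fin 2)) 1) (q 1) ≤ 1 / k := by
    rw [hq1, Real.dist_eq]; exact hjb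
  have hnn0 := dist_nonneg (x := (x : EuclideanSpace ℝ (Fin 2)) 0) (y := q 0)
  have hnn1 := dist_nonneg (x := (x : EuclideanSpace ℝ (Fin 2)) 1) (y := q 1)
  have h2k : (0:ℝ) ≤ 2 / k := by positivity
  rw [show (2:ℝ)/k = √((2/k)^2) from (Real.sqrt_sq h2k).symm]
  apply Real.sqrt_le_sqrt
  have s0 : dist ((x : EuclideanSpace ℝ (Fin 2)) 0) (q 0) ^ 2 ≤ (1/(k:ℝ))^2 :=
    pow_le_pow_left₀ hnn0 d0 2
  have s1 : dist ((x : EuclideanSpace ℝ (Fin 2)) 1) (q 1) ^ 2 ≤ (1/(k:ℝ))^2 :=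
    pow_le_pow_left₀ hnn1 d1 2
  have hsq : (2/(k:ℝ))^2 = 4 * (1/(k:ℝ))^2 := by ring
  have hpos : (0:ℝ) ≤ (1/(k:ℝ))^2 := by positivity
  linarith

/-- The union of the grid spans is dense in the free space. -/
lemma mem_closure_gridSpans (x : ↥(FreeSpace sqBase)) :
    x ∈ (⨆ m, gridSpan m).topologicalClosure := by
  set W := ⨆ m, gridSpan m with hW
  set Wc := W.topologicalClosure with hWc
  -- Step 1: every Dirac element is in the closure
  have hdir : ∀ p : unitSquare, diracF sqBase p ∈ Wc := by
    intro p
    have : diracF sqBase p ∈ closure (W : Set ↥(FreeSpace sqBase)) := by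
      rw [Metric.mem_closure_iff]
      intro δ hδ
      set m : ℕ := ⌈2/δ⌉₊ + 1 with hm
      have hm1 : 1 ≤ m.factorial := m.factorial_pos
      obtain ⟨q, hqgrid, hqdist⟩ := exists_grid_point p m.factorial hm1
      refine ⟨diracF sqBase q, ?_, ?_⟩
      · have h1 : diracF sqBase q ∈ gridDiracs m.factorial := ⟨q, hqgrid, rfl⟩
        have h2 : diracF sqBase q ∈ gridSpan m := Submodule.subset_span h1
        exact (le_iSup gridSpan m) h2
      · have hlt : 2 / (m.factorial : ℝ) < δ := by
          have hmgt : (2/δ : ℝ) < m := by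
            calc (2/δ : ℝ) ≤ ⌈2/δ⌉₊ := Nat.le_ceil _
              _ < m := by exact_mod_cast Nat.lt_succ_self _
          have hmf : (m : ℝ) ≤ m.factorial := by exact_mod_cast Nat.self_le_factorial m
          have hmpos : (0:ℝ) < m := by positivity
          have hfpos : (0:ℝ) < (m.factorial : ℝ) := by exact_mod_cast m.factorial_pos
          have h2d : (0:ℝ) < 2/δ := by positivity
          rw [div_lt_iff₀ hfpos]
          have : (2:ℝ)/δ < m.factorial := lt_of_lt_of_le hmgt hmf
          rw [div_lt_iff₀ hδ] at this
          linarith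
        calc dist (diracF sqBase p) (diracF sqBase q)
            = ‖diracF sqBase p - diracF sqBase q‖ := by exact dist_eq_norm (diracF sqBase p) (diracF sqBase q)
          _ ≤ dist p q := diracF_sub_norm_le sqBase p q
          _ ≤ 2 / m.factorial := hqdist
          _ < δ := hlt
    exact this
  -- Step 2: x is in the closure of the span of all Dirac elements
  have hx : x ∈ closure ((Submodule.span ℝ (Set.range (diracF sqBase)) :
      Submodule ℝ ↥(FreeSpace sqBase)) : Set ↥(FreeSpace sqBase)) := by
    rw [closure_subtype]
    have himg : Subtype.val '' ((Submodule.span ℝ (Set.range (diracF sqBase)) :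
        Submodule ℝ ↥(FreeSpace sqBase)) : Set ↥(FreeSpace sqBase))
        = ((Submodule.span ℝ (Set.range (dirac sqBase)) :
            Submodule ℝ (StrongDual ℝ (Lip0 sqBase))) : Set _) := by
      have h1 : Subtype.val '' ((Submodule.span ℝ (Set.range (diracF sqBase)) :
          Submodule ℝ ↥(FreeSpace sqBase)) : Set ↥(FreeSpace sqBase))
          = ((Submodule.map (FreeSpace sqBase).subtype
              (Submodule.span ℝ (Set.range (diracF sqBase)))) : Set _) := rfl
      rw [h1, Submodule.map_span]
      congr 1
      rw [← Set.range_comp]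
      rfl
    rw [himg]
    exact x.2
  -- Step 3: the span of Dirac elements is inside Wc
  have hspan : (Submodule.span ℝ (Set.range (diracF sqBase)) :
      Submodule ℝ ↥(FreeSpace sqBase)) ≤ Wc := by
    rw [Submodule.span_le]
    rintro _ ⟨p, rfl⟩
    exact hdir p
  have hclosed : IsClosed (Wc : Set ↥(FreeSpace sqBase)) :=
    Submodule.isClosed_topologicalClosure W
  exact closure_minimal hspan hclosed hx

end Aux

set_option maxHeartbeats 4000000
set_option synthInstance.maxHeartbeats 4000000

/-- finite-dimensional subspaces of `F([0,1]²)` are `(1+ε)`-approximated, in the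
Banach-Mazur distance, by finite-dimensional subspaces of `F(nA_n)` for `n` large. -/
theorem finDim_subspace_approx (E : Submodule ℝ ↥(FreeSpace sqBase))
    [FiniteDimensional ℝ E] (ε : ℝ) (hε : 0 < ε) :
    ∃ (n : ℕ) (E' : Submodule ℝ ↥(FreeSpace sqBase)),
      (E' : Set ↥(FreeSpace sqBase)) ⊆ ↑(Submodule.span ℝ (gridDiracs n)) ∧
      ∃ (T : E ≃ₗ[ℝ] E') (C C' : ℝ),
        (∀ v : E, ‖(T v : ↥(FreeSpace sqBase))‖ ≤ C * ‖(v : ↥(FreeSpace sqBase))‖) ∧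
        (∀ w : E', ‖(T.symm w : ↥(FreeSpace sqBase))‖ ≤ C' * ‖(w : ↥(FreeSpace sqBase))‖) ∧
        C * C' < 1 + ε := by
  classical
  letI hNE : NormedAddCommGroup ↥E :=
    @Submodule.normedAddCommGroup ℝ ↥(FreeSpace sqBase) _ (Submodule.normedAddCommGroup (FreeSpace sqBase))
      (FreeSpace sqBase).module E
  letI hSNE : SeminormedAddCommGroup ↥E := hNE.toSeminormedAddCommGroup
  letI hNSE : NormedSpace ℝ ↥E :=
    @Submodule.normedSpace ℝ ℝ _ _ _ ↥(FreeSpace sqBase) (Submodule.normedAddCommGroup (FreeSpace sqBase)).toSeminormedAddCommGroup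
      (Submodule.normedSpace (FreeSpace sqBase)) (FreeSpace sqBase).module _ E
  letI hFree : Module.Free ℝ ↥E := Module.Free.of_divisionRing ℝ ↥E
  -- basis of E
  set k := Module.finrank ℝ E with hk
  set b : Module.Basis (Fin k) ℝ E := Module.finBasis ℝ E with hb
  -- continuous coordinate functionals
  set g : E →L[ℝ] (Fin k → ℝ) := (Module.Basis.equivFunL (ι := Fin k) (𝕜 := ℝ) (E := E) b).toContinuousLinearMap with hg
  set c : ℝ := (k : ℝ) * ‖g‖ + 1 with hc
  have hc0 : 0 < c := by
    have : (0:ℝ) ≤ (k : ℝ) * ‖g‖ := by positivity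
    linarith
  have hcoord : ∀ x : E, ∑ i, |b.coord i x| ≤ c * ‖x‖ := by
    intro x
    have h1 : ∀ i, |b.coord i x| ≤ ‖g‖ * ‖x‖ := by
      intro i
      have h2 : b.coord i x = (g x) i := by
        rw [hg]
        simp [Module.Basis.coord_apply, Module.Basis.equivFunL_apply, Module.Basis.equivFun_apply]
      rw [h2, ← Real.norm_eq_abs]
      calc ‖(g x) i‖ ≤ ‖g x‖ := norm_le_pi_norm (g x) i
        _ ≤ ‖g‖ * ‖x‖ := g.le_opNorm x
    calc ∑ i, |b.coord i x| ≤ ∑ _i : Fin k, ‖g‖ * ‖x‖ := Finset.sum_le_sum fun i _ => h1 i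
      _ = (k : ℝ) * (‖g‖ * ‖x‖) := by
          rw [Finset.sum_const, Finset.card_univ, Fintype.card_fin, nsmul_eq_mul]
      _ = ((k : ℝ) * ‖g‖) * ‖x‖ := by ring
      _ ≤ c * ‖x‖ := by
          apply mul_le_mul_of_nonneg_right _ (norm_nonneg x)
          rw [hc]; linarith
  -- perturbation parameter
  set t : ℝ := ε / (2 * (2 + ε)) with ht
  have ht0 : 0 < t := by rw [ht]; positivity
  have ht2 : t < 1 / 2 := by
    rw [ht, div_lt_div_iff₀ (by positivity) (by norm_num)]
    nlinarith
  have ht1 : t < 1 := by linarith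
  set δ : ℝ := t / c with hδ
  have hδ0 : 0 < δ := by rw [hδ]; positivity
  -- approximate basis vectors
  have happrox : ∀ i : Fin k, ∃ m : ℕ, ∃ u ∈ gridSpan m, ‖(b i : ↥(FreeSpace sqBase)) - u‖ < δ := by
    intro i
    have hmem : (b i : ↥(FreeSpace sqBase)) ∈
        closure ((⨆ m, gridSpan m : Submodule ℝ ↥(FreeSpace sqBase)) : Set ↥(FreeSpace sqBase)) :=
      mem_closure_gridSpans ((b i : ↥(FreeSpace sqBase)))
    rw [Metric.mem_closure_iff] at hmem
    obtain ⟨u, hu, hdu⟩ := hmem δ hδ0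
    rw [Submodule.coe_iSup_of_directed gridSpan gridSpan_mono.directed_le,
      Set.mem_iUnion] at hu
    obtain ⟨m, hm⟩ := hu
    exact ⟨m, u, hm, by rwa [show dist (b i : ↥(FreeSpace sqBase)) u = ‖(b i : ↥(FreeSpace sqBase)) - u‖ by exact dist_eq_norm (b i : ↥(FreeSpace sqBase)) u] at hdu⟩
  choose m u hu hnear using happrox
  set N : ℕ := Finset.univ.sup m with hN
  have huN : ∀ i, u i ∈ gridSpan N := fun i =>
    gridSpan_mono (Finset.le_sup (Finset.mem_univ i)) (hu i)
  set n : ℕ := N.factorial with hn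
  -- the linear map
  set φ : E →ₗ[ℝ] ↥(FreeSpace sqBase) := ∑ i, LinearMap.smulRight (b.coord i) (u i) with hφ
  have hφapp : ∀ x : E, φ x = ∑ i, b.coord i x • u i := by
    intro x
    rw [hφ]
    simp [LinearMap.sum_apply, LinearMap.smulRight_apply]
  -- key estimate
  have hkey : ∀ x : E, ‖φ x - (x : ↥(FreeSpace sqBase))‖ ≤ t * ‖(x : ↥(FreeSpace sqBase))‖ := by
    intro x
    have hxrep : (x : ↥(FreeSpace sqBase)) = ∑ i, b.coord i x • (b i : ↥(FreeSpace sqBase)) := by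
      conv_lhs => rw [← b.sum_repr x]
      push_cast
      exact Finset.sum_congr rfl fun i _ => by rw [Module.Basis.coord_apply]
    have hdiff : φ x - (x : ↥(FreeSpace sqBase)) = ∑ i, b.coord i x • (u i - (b i : ↥(FreeSpace sqBase))) := by
      rw [hφapp, hxrep]
      refine (Finset.sum_sub_distrib (G := ↥(FreeSpace sqBase)) _ _).symm.trans ?_
      exact Finset.sum_congr rfl fun i _ => Subtype.ext (smul_sub (b.coord i x) (u i : StrongDual ℝ (Lip0 sqBase))
        ((b i : ↥(FreeSpace sqBase)) : StrongDual ℝ (Lip0 sqBase))).symm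
    rw [hdiff]
    calc ‖∑ i, b.coord i x • (u i - (b i : ↥(FreeSpace sqBase)))‖
        ≤ ∑ i, ‖b.coord i x • (u i - (b i : ↥(FreeSpace sqBase)))‖ := by exact norm_sum_le (E := ↥(FreeSpace sqBase)) _ _
      _ = ∑ i, |b.coord i x| * ‖u i - (b i : ↥(FreeSpace sqBase))‖ := by
          refine Finset.sum_congr rfl fun i _ => ?_
          have hns : ‖(b.coord i) x • (u i - ((b i : ↥E) : ↥(FreeSpace sqBase)))‖ = ‖(b.coord i) x‖ * ‖u i - ((b i : ↥E) : ↥(FreeSpace sqBase))‖ :=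
              norm_smul (α := ℝ) (β := StrongDual ℝ (Lip0 sqBase)) _ _
          rw [Real.norm_eq_abs] at hns
          exact hns
      _ ≤ ∑ i, |b.coord i x| * δ := by
          apply Finset.sum_le_sum
          intro i _
          apply mul_le_mul_of_nonneg_left _ (abs_nonneg _)
          have hni := (hnear i).le
          rwa [show ‖(b i : ↥(FreeSpace sqBase)) - u i‖ = ‖u i - (b i : ↥(FreeSpace sqBase))‖ by exact norm_sub_rev (b i : ↥(FreeSpace sqBase)) (u i)] at hni
      _ = (∑ i, |b.coord i x|) * δ := by rw [Finset.sum_mul]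
      _ ≤ (c * ‖x‖) * δ := mul_le_mul_of_nonneg_right (hcoord x) hδ0.le
      _ = t * ‖x‖ := by rw [hδ]; field_simp
      _ = t * ‖(x : ↥(FreeSpace sqBase))‖ := rfl
  have hupper : ∀ x : E, ‖φ x‖ ≤ (1 + t) * ‖(x : ↥(FreeSpace sqBase))‖ := by
    intro x
    calc ‖φ x‖ = ‖(x : ↥(FreeSpace sqBase)) + (φ x - (x : ↥(FreeSpace sqBase)))‖ := by
          rw [show (x : ↥(FreeSpace sqBase)) + (φ x - (x : ↥(FreeSpace sqBase))) = φ x from by abel]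
      _ ≤ ‖(x : ↥(FreeSpace sqBase))‖ + ‖φ x - (x : ↥(FreeSpace sqBase))‖ := by
          exact norm_add_le (x : ↥(FreeSpace sqBase)) (φ x - (x : ↥(FreeSpace sqBase)))
      _ ≤ ‖(x : ↥(FreeSpace sqBase))‖ + t * ‖(x : ↥(FreeSpace sqBase))‖ := by linarith [hkey x]
      _ = (1 + t) * ‖(x : ↥(FreeSpace sqBase))‖ := by ring
  have hlower : ∀ x : E, (1 - t) * ‖(x : ↥(FreeSpace sqBase))‖ ≤ ‖φ x‖ := by
    intro x
    have h1 := norm_sub_norm_le ((x : ↥(FreeSpace sqBase))) (φ x)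
    have h2 : ‖(x : ↥(FreeSpace sqBase)) - φ x‖ = ‖φ x - (x : ↥(FreeSpace sqBase))‖ :=
      by exact norm_sub_rev (x : ↥(FreeSpace sqBase)) (φ x)
    have h3 := hkey x
    linarith
  have hinj : Function.Injective φ := by
    refine (injective_iff_map_eq_zero φ).2 ?_
    intro z hz
    have h2 := hlower z
    rw [hz, show ‖(0 : ↥(FreeSpace sqBase))‖ = 0 by
      exact (norm_zero : ‖(0 : StrongDual ℝ (Lip0 sqBase))‖ = 0)] at h2
    have h3 : ‖(z : ↥(FreeSpace sqBase))‖ ≤ 0 := by nlinarith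
    have h4 : (z : ↥(FreeSpace sqBase)) = 0 :=
      Subtype.ext (norm_le_zero_iff.1 (show ‖(((z : ↥(FreeSpace sqBase))) : StrongDual ℝ (Lip0 sqBase))‖ ≤ 0 from h3))
    exact_mod_cast h4
  refine ⟨n, LinearMap.range φ, ?_, LinearEquiv.ofInjective φ hinj, 1 + t, (1 - t)⁻¹,
    ?_, ?_, ?_⟩
  · rintro _ ⟨x, rfl⟩
    rw [hφapp]
    apply Submodule.sum_mem
    intro i _
    exact Submodule.smul_mem _ _ (huN i)
  · intro v
    rw [LinearEquiv.ofInjective_apply]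
    exact hupper v
  · intro w
    set v := (LinearEquiv.ofInjective φ hinj).symm w with hv
    have h2 : (LinearEquiv.ofInjective φ hinj) v = w := LinearEquiv.apply_symm_apply _ _
    have hwv : (w : ↥(FreeSpace sqBase)) = φ v := by
      rw [← h2]
      exact LinearEquiv.ofInjective_apply (h := hinj) φ v
    have h1 := hlower v
    rw [← hwv] at h1
    have h1t : 0 < 1 - t := by linarith
    rw [inv_mul_eq_div, le_div_iff₀ h1t]
    linarith
  · have h1t : 0 < 1 - t := by linarith
    have h2e : (0:ℝ) < 2 + ε := by linarith
    have htprod : t * (2 + ε) = ε / 2 := by rw [ht]; field_simp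
    rw [← div_eq_mul_inv, div_lt_iff₀ h1t]
    nlinarith [htprod]


end Statement16
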